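/- arXiv:1611.06633 — 8 statements merged into one kernel-verified Lean document; each statement's English description precedes it below -/
import Mathlib

section
/- Let x_h be any vector with A·x_h = 0, and assume the compatibility condition I_m^S·(M·b) = M·b holds (equivalently, (M·b)_i = 0 for every i ∉ S). Then x = (A')*·(M·b) + x_h satisfies A·x = b. -/
open Matrix

/-- Row-based in situ solution: if `A' = M * A` has quasi-orthonormal rows
(`A' * A'ᴴ = I_m^S`) and the compatibility condition `I_m^S ⬝ (M b) = M b` holds,
then `x = A'ᴴ (M b) + x_h` solves `A x = b` for any null-space vector `x_h`. -/
theorem row_in_situ_solution {m n : ℕ}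
    (A : Matrix (Fin m) (Fin n) ℂ) (b : Fin m → ℂ)
    (M : Matrix (Fin m) (Fin m) ℂ) (hM : IsUnit M)
    (A' : Matrix (Fin m) (Fin n) ℂ) (hA' : A' = M * A)
    (S : Finset (Fin m))
    (hQO : A' * A'ᴴ = Matrix.diagonal (fun i => if i ∈ S then (1 : ℂ) else 0))
    (hcompat : (Matrix.diagonal (fun i => if i ∈ S then (1 : ℂ) else 0)) *ᵥ (M *ᵥ b)
      = M *ᵥ b)
    (x_h : Fin n → ℂ) (hxh : A *ᵥ x_h = 0) :
    A *ᵥ (A'ᴴ *ᵥ (M *ᵥ b) + x_h) = b := by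
  have key : M *ᵥ (A *ᵥ (A'ᴴ *ᵥ (M *ᵥ b) + x_h)) = M *ᵥ b := by
    rw [Matrix.mulVec_add, hxh, add_zero, Matrix.mulVec_mulVec, Matrix.mulVec_mulVec,
      ← hA', hQO]
    exact hcompat
  have hd : M⁻¹ * M = 1 := Matrix.nonsing_inv_mul M ((Matrix.isUnit_iff_isUnit_det M).mp hM)
  have := congrArg (fun w => M⁻¹ *ᵥ w) key
  simpa [Matrix.mulVec_mulVec, ← Matrix.mul_assoc, hd] using this
end

section
/- The matrix G = (A')*·M satisfies the first Penrose condition: A·G·A = A. -/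
open Matrix

/-- Row-based generalized inverse `G = A'ᴴ * M` satisfies the first Penrose
condition `A G A = A`. -/
theorem row_G_penrose_one {m n : ℕ}
    (A : Matrix (Fin m) (Fin n) ℂ)
    (M : Matrix (Fin m) (Fin m) ℂ) (hM : IsUnit M)
    (A' : Matrix (Fin m) (Fin n) ℂ) (hA' : A' = M * A)
    (S : Finset (Fin m))
    (hQO : A' * A'ᴴ = Matrix.diagonal (fun i => if i ∈ S then (1 : ℂ) else 0)) :
    A * (A'ᴴ * M) * A = A := by
  have hdet : IsUnit M.det := (Matrix.isUnit_iff_isUnit_det M).mp hM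
  have hA : A = M⁻¹ * A' := by
    rw [hA', ← Matrix.mul_assoc, Matrix.nonsing_inv_mul M hdet, Matrix.one_mul]
  -- rows of A' not in S are zero
  have hzero : ∀ i ∉ S, ∀ j, A' i j = 0 := by
    intro i hi j
    have hd : (A' * A'ᴴ) i i = 0 := by
      rw [hQO]; simp [Matrix.diagonal_apply_eq, hi]
    have hsum : ∑ k, Complex.normSq (A' i k) = 0 := by
      have : (A' * A'ᴴ) i i = ((∑ k, Complex.normSq (A' i k) : ℝ) : ℂ) := by
        simp [Matrix.mul_apply, Matrix.conjTranspose_apply, Complex.mul_conj]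
      rw [this] at hd
      exact_mod_cast hd
    have := (Finset.sum_eq_zero_iff_of_nonneg
      (fun k _ => Complex.normSq_nonneg (A' i k))).mp hsum j (Finset.mem_univ j)
    exact Complex.normSq_eq_zero.mp this
  have key : A' * A'ᴴ * A' = A' := by
    rw [hQO]
    ext i j
    rw [Matrix.diagonal_mul]
    by_cases hi : i ∈ S
    · simp [hi]
    · simp [hi, hzero i hi j]
  calc A * (A'ᴴ * M) * A = A * A'ᴴ * (M * A) := by
        rw [← Matrix.mul_assoc, Matrix.mul_assoc (A * A'ᴴ)]
      _ = A * A'ᴴ * A' := by rw [← hA']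
      _ = M⁻¹ * (A' * A'ᴴ * A') := by
        rw [hA, Matrix.mul_assoc, Matrix.mul_assoc, Matrix.mul_assoc]
      _ = M⁻¹ * A' := by rw [key]
      _ = A := hA.symm
end

section
/- The matrix G = (A')*·M satisfies the second Penrose condition: G·A·G = G. -/
open Matrix

/-- Row-based generalized inverse `G = A'ᴴ * M` satisfies the second Penrose
condition `G A G = G`. -/
theorem row_G_penrose_two {m n : ℕ}
    (A : Matrix (Fin m) (Fin n) ℂ)
    (M : Matrix (Fin m) (Fin m) ℂ) (hM : IsUnit M)
    (A' : Matrix (Fin m) (Fin n) ℂ) (hA' : A' = M * A)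
    (S : Finset (Fin m))
    (hQO : A' * A'ᴴ = Matrix.diagonal (fun i => if i ∈ S then (1 : ℂ) else 0)) :
    (A'ᴴ * M) * A * (A'ᴴ * M) = A'ᴴ * M := by
  -- rows not in S are zero
  have hrow : ∀ j : Fin m, j ∉ S → ∀ k : Fin n, A' j k = 0 := by
    intro j hj k
    have h := congrFun (congrFun hQO j) j
    simp [Matrix.mul_apply, Matrix.conjTranspose_apply, Matrix.diagonal_apply_eq, hj] at h
    have h2 : ∑ x : Fin n, Complex.normSq (A' j x) = 0 := by
      have := congrArg Complex.re h
      simpa [Complex.mul_conj] using this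
    have h3 := (Finset.sum_eq_zero_iff_of_nonneg (fun x _ => Complex.normSq_nonneg (A' j x))).mp h2 k (Finset.mem_univ k)
    exact Complex.normSq_eq_zero.mp h3
  have hD : A'ᴴ * (A' * A'ᴴ) = A'ᴴ := by
    rw [hQO]
    ext i j
    by_cases hj : j ∈ S
    · simp [Matrix.mul_apply, Matrix.diagonal, hj, Finset.sum_ite_eq, Matrix.conjTranspose_apply]
    · simp [Matrix.mul_apply, Matrix.diagonal, hj, Finset.sum_ite_eq, Matrix.conjTranspose_apply,
        hrow j hj i]
  calc (A'ᴴ * M) * A * (A'ᴴ * M)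
      = A'ᴴ * (M * A) * A'ᴴ * M := by simp only [Matrix.mul_assoc]
    _ = A'ᴴ * (A' * A'ᴴ) * M := by rw [← hA', Matrix.mul_assoc A'ᴴ A' A'ᴴ]
    _ = A'ᴴ * M := by rw [hD]
end

section
/- If A'·(A')* = 1_m (the m×m identity matrix, i.e., A has full row rank and all rows of A' are orthonormal), then G = (A')*·M satisfies all four Penrose conditions: A·G·A = A, G·A·G = G, A·G = (A·G)*, and G·A = (G·A)*; in particular A·G = 1_m, so G is the Moore–Penrose inverse of A. -/
open Matrix

/-- If the rows of `A' = M * A` are fully orthonormal (`A' * A'ᴴ = 1`), then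
`G = A'ᴴ * M` satisfies all four Penrose conditions, and `A * G = 1`, so `G`
is the Moore–Penrose inverse of `A`. -/
theorem row_G_full_rank_moore_penrose {m n : ℕ}
    (A : Matrix (Fin m) (Fin n) ℂ)
    (M : Matrix (Fin m) (Fin m) ℂ) (hM : IsUnit M)
    (A' : Matrix (Fin m) (Fin n) ℂ) (hA' : A' = M * A)
    (hfull : A' * A'ᴴ = (1 : Matrix (Fin m) (Fin m) ℂ)) :
    A * (A'ᴴ * M) * A = A ∧
    (A'ᴴ * M) * A * (A'ᴴ * M) = A'ᴴ * M ∧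
    A * (A'ᴴ * M) = (A * (A'ᴴ * M))ᴴ ∧
    (A'ᴴ * M) * A = ((A'ᴴ * M) * A)ᴴ ∧
    A * (A'ᴴ * M) = (1 : Matrix (Fin m) (Fin m) ℂ) := by
  obtain ⟨u, hu⟩ := hM
  subst hu
  have hNM : (↑u⁻¹ : Matrix (Fin m) (Fin m) ℂ) * (↑u : Matrix (Fin m) (Fin m) ℂ) = 1 := u.inv_mul
  have hA : A = (↑u⁻¹ : Matrix (Fin m) (Fin m) ℂ) * A' := by
    rw [hA', ← Matrix.mul_assoc, hNM, Matrix.one_mul]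
  have key : A * (A'ᴴ * (↑u : Matrix (Fin m) (Fin m) ℂ)) = 1 := by
    rw [hA, Matrix.mul_assoc, ← Matrix.mul_assoc A', hfull, Matrix.one_mul, u.inv_mul]
  refine ⟨?_, ?_, ?_, ?_, key⟩
  · rw [key, Matrix.one_mul]
  · rw [Matrix.mul_assoc (A'ᴴ * (↑u : Matrix (Fin m) (Fin m) ℂ)) A, key, Matrix.mul_one]
  · rw [key, Matrix.conjTranspose_one]
  · have h : (A'ᴴ * (↑u : Matrix (Fin m) (Fin m) ℂ)) * A = A'ᴴ * A' := by
      rw [Matrix.mul_assoc, ← hA']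
    rw [h, Matrix.conjTranspose_mul, Matrix.conjTranspose_conjTranspose]
end

section
/- The matrix G = M·(A')* satisfies the first Penrose condition: A·G·A = A. -/
open Matrix

/-- Column-based generalized inverse `G = M * A'ᴴ` satisfies the first Penrose
condition `A G A = A`. -/
theorem col_G_penrose_one {m n : ℕ}
    (A : Matrix (Fin m) (Fin n) ℂ)
    (M : Matrix (Fin n) (Fin n) ℂ) (hM : IsUnit M)
    (A' : Matrix (Fin m) (Fin n) ℂ) (hA' : A' = A * M)
    (S : Finset (Fin n))
    (hQO : A'ᴴ * A' = Matrix.diagonal (fun j => if j ∈ S then (1 : ℂ) else 0)) :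
    A * (M * A'ᴴ) * A = A := by
  have hdet : IsUnit M.det := (Matrix.isUnit_iff_isUnit_det M).mp hM
  have hAeq : A = A' * M⁻¹ := by
    rw [hA', Matrix.mul_assoc, Matrix.mul_nonsing_inv M hdet, Matrix.mul_one]
  -- columns not in S are zero
  have hcol : ∀ j, j ∉ S → ∀ i, A' i j = 0 := by
    intro j hj i
    have hdiag : (A'ᴴ * A') j j = 0 := by
      rw [hQO, Matrix.diagonal_apply_eq, if_neg hj]
    have hsum : ∑ k, Complex.normSq (A' k j) = 0 := by
      have : ((∑ k, Complex.normSq (A' k j) : ℝ) : ℂ) = 0 := by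
        push_cast
        rw [← hdiag, Matrix.mul_apply]
        refine Finset.sum_congr rfl fun k _ => ?_
        rw [Matrix.conjTranspose_apply, Complex.normSq_eq_conj_mul_self]
        rfl
      exact_mod_cast this
    have hzero : Complex.normSq (A' i j) = 0 :=
      (Finset.sum_eq_zero_iff_of_nonneg (fun k _ => Complex.normSq_nonneg _)).mp hsum i
        (Finset.mem_univ i)
    exact Complex.normSq_eq_zero.mp hzero
  have hkey : A' * (A'ᴴ * A') = A' := by
    rw [hQO]
    ext i j
    rw [Matrix.mul_diagonal]
    by_cases hj : j ∈ S
    · rw [if_pos hj, mul_one]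
    · rw [if_neg hj, mul_zero, hcol j hj i]
  calc A * (M * A'ᴴ) * A = A' * (A'ᴴ * A') * M⁻¹ := by
        rw [hAeq, Matrix.mul_assoc A' M⁻¹, ← Matrix.mul_assoc M⁻¹ M,
          Matrix.nonsing_inv_mul M hdet, Matrix.one_mul]
        simp only [Matrix.mul_assoc]
      _ = A' * M⁻¹ := by rw [hkey]
      _ = A := hAeq.symm
end

section
/- The matrix G = M·(A')* satisfies the second Penrose condition: G·A·G = G. -/
open Matrix

/-- Column-based generalized inverse `G = M * A'ᴴ` satisfies the second Penrose
condition `G A G = G`. -/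
theorem col_G_penrose_two {m n : ℕ}
    (A : Matrix (Fin m) (Fin n) ℂ)
    (M : Matrix (Fin n) (Fin n) ℂ) (hM : IsUnit M)
    (A' : Matrix (Fin m) (Fin n) ℂ) (hA' : A' = A * M)
    (S : Finset (Fin n))
    (hQO : A'ᴴ * A' = Matrix.diagonal (fun j => if j ∈ S then (1 : ℂ) else 0)) :
    (M * A'ᴴ) * A * (M * A'ᴴ) = M * A'ᴴ := by
  have hcol : ∀ j, j ∉ S → ∀ i, A' i j = 0 := by
    intro j hj i
    have h0 : (A'ᴴ * A') j j = 0 := by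
      rw [hQO]; simp [Matrix.diagonal_apply_eq, hj]
    have h0' : ∑ k, Complex.normSq (A' k j) = 0 := by
      have := h0
      simp only [Matrix.mul_apply, Matrix.conjTranspose_apply] at this
      have : ∑ k, (Complex.normSq (A' k j) : ℂ) = 0 := by
        rw [← this]
        refine Finset.sum_congr rfl fun k _ => ?_
        rw [Complex.normSq_eq_conj_mul_self]; rfl
      exact_mod_cast this
    have := Finset.sum_eq_zero_iff_of_nonneg (fun k _ => Complex.normSq_nonneg _) |>.mp h0' i (Finset.mem_univ i)
    exact Complex.normSq_eq_zero.mp this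
  have hD : Matrix.diagonal (fun j => if j ∈ S then (1 : ℂ) else 0) * A'ᴴ = A'ᴴ := by
    ext i j
    rw [Matrix.diagonal_mul]
    by_cases hi : i ∈ S
    · simp [hi]
    · simp [hi, Matrix.conjTranspose_apply, hcol i hi j]
  calc (M * A'ᴴ) * A * (M * A'ᴴ)
      = M * (A'ᴴ * (A * M)) * A'ᴴ := by simp only [Matrix.mul_assoc]
    _ = M * (A'ᴴ * A') * A'ᴴ := by rw [← hA']
    _ = M * (Matrix.diagonal (fun j => if j ∈ S then (1 : ℂ) else 0) * A'ᴴ) := by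
        rw [hQO, Matrix.mul_assoc]
    _ = M * A'ᴴ := by rw [hD]
end

section
/- If (A')*·A' = 1_n (the n×n identity matrix, i.e., A has full column rank and all columns of A' are orthonormal), then G = M·(A')* satisfies all four Penrose conditions: A·G·A = A, G·A·G = G, A·G = (A·G)*, and G·A = (G·A)*; in particular G·A = 1_n, so G is the Moore–Penrose inverse of A. -/
open Matrix

/-- If the columns of `A' = A * M` are fully orthonormal (`A'ᴴ * A' = 1`), then
`G = M * A'ᴴ` satisfies all four Penrose conditions, and `G * A = 1`, so `G`
is the Moore–Penrose inverse of `A`. -/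
theorem col_G_full_rank_moore_penrose {m n : ℕ}
    (A : Matrix (Fin m) (Fin n) ℂ)
    (M : Matrix (Fin n) (Fin n) ℂ) (hM : IsUnit M)
    (A' : Matrix (Fin m) (Fin n) ℂ) (hA' : A' = A * M)
    (hfull : A'ᴴ * A' = (1 : Matrix (Fin n) (Fin n) ℂ)) :
    A * (M * A'ᴴ) * A = A ∧
    (M * A'ᴴ) * A * (M * A'ᴴ) = M * A'ᴴ ∧
    A * (M * A'ᴴ) = (A * (M * A'ᴴ))ᴴ ∧
    (M * A'ᴴ) * A = ((M * A'ᴴ) * A)ᴴ ∧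
    (M * A'ᴴ) * A = (1 : Matrix (Fin n) (Fin n) ℂ) := by
  obtain ⟨N, hMN, hNM⟩ := isUnit_iff_exists.mp hM
  have hAG : A * (M * A'ᴴ) = A' * A'ᴴ := by
    rw [hA', Matrix.mul_assoc]
  have hGA : (M * A'ᴴ) * A = 1 := by
    have hA : A = A' * N := by
      rw [hA', Matrix.mul_assoc, hMN, Matrix.mul_one]
    rw [hA, Matrix.mul_assoc, ← Matrix.mul_assoc A'ᴴ, hfull, Matrix.one_mul, hMN]
  refine ⟨?_, ?_, ?_, ?_, hGA⟩
  · rw [Matrix.mul_assoc, hGA, Matrix.mul_one]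
  · rw [hGA, Matrix.one_mul]
  · rw [hAG, conjTranspose_mul, conjTranspose_conjTranspose]
  · rw [hGA, conjTranspose_one]
end

section
/- Assume the compatibility condition I_m^S·(M·b) = M·b holds. Then the particular solution x_p = (A')*·(M·b) is a minimum-norm solution: for every vector y with A·y = b, the Euclidean norm satisfies ‖x_p‖ ≤ ‖y‖. -/
/-!
A solution of `A y = b` also solves `A' y = M b`, and so does `x_p = A'ᴴ (M b)`:
`A' x_p = (A' A'ᴴ) (M b) = I_S (M b) = M b`. Lying in the row space of `A'`, `x_p` is orthogonal
to the kernel of `A'`, which contains `y - x_p`; Pythagoras then gives `‖x_p‖ ≤ ‖y‖`.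
-/

open Matrix

noncomputable def euclNorm {n : ℕ} (v : Fin n → ℂ) : ℝ :=
  ‖(WithLp.equiv 2 (Fin n → ℂ)).symm v‖

open WithLp

theorem norm_le_norm_add_of_inner_eq_zero {𝕜 E : Type*} [RCLike 𝕜] [NormedAddCommGroup E]
    [InnerProductSpace 𝕜 E] {x y : E} (h : inner 𝕜 x y = 0) : ‖x‖ ≤ ‖x + y‖ := by
  refine (sq_le_sq₀ (norm_nonneg _) (norm_nonneg _)).mp ?_
  rw [sq, sq, norm_add_sq_eq_norm_sq_add_norm_sq_of_inner_eq_zero x y h]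
  nlinarith [norm_nonneg y]

namespace Matrix

variable {𝕜 m n : Type*} [RCLike 𝕜] [Fintype m] [Fintype n]

theorem inner_toLp_conjTranspose_mulVec (B : Matrix m n 𝕜) (c : m → 𝕜) (z : n → 𝕜) :
    inner 𝕜 (toLp 2 (Bᴴ *ᵥ c)) (toLp 2 z) = inner 𝕜 (toLp 2 c) (toLp 2 (B *ᵥ z)) := by
  rw [EuclideanSpace.inner_toLp_toLp, EuclideanSpace.inner_toLp_toLp, star_mulVec,
    conjTranspose_conjTranspose, dotProduct_comm, ← dotProduct_mulVec, dotProduct_comm]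

theorem norm_toLp_conjTranspose_mulVec_le (B : Matrix m n 𝕜) (c : m → 𝕜) {y : n → 𝕜}
    (hy : B *ᵥ y = B *ᵥ (Bᴴ *ᵥ c)) : ‖toLp 2 (Bᴴ *ᵥ c)‖ ≤ ‖toLp 2 y‖ := by
  have horth : inner 𝕜 (toLp 2 (Bᴴ *ᵥ c)) (toLp 2 (y - Bᴴ *ᵥ c)) = 0 := by
    rw [inner_toLp_conjTranspose_mulVec, mulVec_sub, hy, sub_self, toLp_zero, inner_zero_right]
  simpa only [← toLp_add, add_sub_cancel] using norm_le_norm_add_of_inner_eq_zero horth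

end Matrix

theorem row_particular_solution_min_norm_general {m n : ℕ}
    (A : Matrix (Fin m) (Fin n) ℂ) (b : Fin m → ℂ)
    (M : Matrix (Fin m) (Fin m) ℂ)
    (A' : Matrix (Fin m) (Fin n) ℂ) (hA' : A' = M * A)
    (S : Finset (Fin m))
    (hQO : A' * A'ᴴ = Matrix.diagonal (fun i => if i ∈ S then (1 : ℂ) else 0))
    (hcompat : (Matrix.diagonal (fun i => if i ∈ S then (1 : ℂ) else 0)) *ᵥ (M *ᵥ b)
      = M *ᵥ b) :
    ∀ y : Fin n → ℂ, A *ᵥ y = b → euclNorm (A'ᴴ *ᵥ (M *ᵥ b)) ≤ euclNorm y := by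
  intro y hy
  have hA'y : A' *ᵥ y = M *ᵥ b := by rw [hA', ← mulVec_mulVec, hy]
  have hA'xp : A' *ᵥ (A'ᴴ *ᵥ (M *ᵥ b)) = M *ᵥ b := by rw [mulVec_mulVec, hQO, hcompat]
  exact A'.norm_toLp_conjTranspose_mulVec_le _ (hA'y.trans hA'xp.symm)

/-- Minimum-norm property of the row-based particular solution
`x_p = A'ᴴ (M b)`: it has Euclidean norm no larger than any solution of `A y = b`. -/
theorem row_particular_solution_min_norm {m n : ℕ}
    (A : Matrix (Fin m) (Fin n) ℂ) (b : Fin m → ℂ)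
    (M : Matrix (Fin m) (Fin m) ℂ) (hM : IsUnit M)
    (A' : Matrix (Fin m) (Fin n) ℂ) (hA' : A' = M * A)
    (S : Finset (Fin m))
    (hQO : A' * A'ᴴ = Matrix.diagonal (fun i => if i ∈ S then (1 : ℂ) else 0))
    (hcompat : (Matrix.diagonal (fun i => if i ∈ S then (1 : ℂ) else 0)) *ᵥ (M *ᵥ b)
      = M *ᵥ b) :
    ∀ y : Fin n → ℂ, A *ᵥ y = b → euclNorm (A'ᴴ *ᵥ (M *ᵥ b)) ≤ euclNorm y :=
  row_particular_solution_min_norm_general A b M A' hA' S hQO hcompat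
end
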